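/- For ℓ ∈ {0,1} and every n ≥ 0, for each fixed x ∈ ℝ the function ζ ↦ P_{n+1}^(ℓ)(x;ζ) is differentiable on (0,∞) and ∂P_{n+1}^(ℓ)/∂ζ (x;ζ) = a_n^(ℓ)·P_n^(ℓ)(x;ζ) − (1/2)·(G(ζ) − ζ^{−1} − b_{n+1}^(ℓ))·P_{n+1}^(ℓ)(x;ζ). -/

import Mathlib

/-!
Write `L_ζ p = ∫₁^∞ p(x) (x² - 1)^(ℓ - 1/2) e^(-ζx) dx`, so that the `P_n(·; ζ)` are orthogonal for
`L_ζ` with `L_ζ (P_n²) = K₁(ζ)`, and `∂_ζ L_ζ p = -L_ζ (x p)` because the weight depends on `ζ` only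
through `e^(-ζx)`. Differentiating the orthogonality relations therefore gives
`L(∂P_m · P_k) + L(P_m · ∂P_k) - L(x P_m P_k) = δ_{mk} K₁'(ζ)`. Since `∂P_{n+1}` has degree `≤ n + 1`,
pairing it with `P_k` gives `0` for `k < n`, `L(x P_{n+1} P_n) = a_n K₁` for `k = n`, and
`(b_{n+1} K₁ + K₁')/2` for `k = n + 1`; the Bessel relation `K₁' = K₁/ζ - K₂` turns the last one into
the stated coefficient. Differentiation under the integral sign is only needed for the moments
`∫ x^r (x² - 1)^α e^(-ζx) dx`, whose derivative is minus the next moment; the polynomials, whose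
coefficients are differentiable, are handled coefficientwise.
-/

open MeasureTheory Polynomial

noncomputable def besselK (n : ℕ) (ζ : ℝ) : ℝ :=
  ∫ t in Set.Ioi (0 : ℝ), Real.cosh ((n : ℝ) * t) * Real.exp (-ζ * Real.cosh t)

noncomputable def Gfun (ζ : ℝ) : ℝ := besselK 2 ζ / besselK 1 ζ

noncomputable def wgt (ℓ : ℕ) (ζ x : ℝ) : ℝ :=
  (x ^ 2 - 1) ^ ((ℓ : ℝ) - 1 / 2) * Real.exp (-ζ * x) / besselK 1 ζ

open Set Filter Topology

structure IsOrthogonalFamily {K : Type*} [Field K] (L : K[X] →ₗ[K] K) (P : ℕ → K[X]) (c : K) :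
    Prop where
  natDegree_eq : ∀ n, (P n).natDegree = n
  map_mul : ∀ m n, L (P m * P n) = if m = n then c else 0
  const_ne_zero : c ≠ 0

namespace IsOrthogonalFamily

variable {K : Type*} [Field K] {L : K[X] →ₗ[K] K} {P : ℕ → K[X]} {c : K}

theorem ne_zero (h : IsOrthogonalFamily L P c) (n : ℕ) : P n ≠ 0 := fun hn =>
  h.const_ne_zero (by simpa [hn] using (h.map_mul n n).symm)

theorem coeff_self (h : IsOrthogonalFamily L P c) (n : ℕ) :
    (P n).coeff n = (P n).leadingCoeff := by
  rw [leadingCoeff, h.natDegree_eq]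

def toSequence (h : IsOrthogonalFamily L P c) : Polynomial.Sequence K where
  elems' := P
  degree_eq' n := by rw [degree_eq_natDegree (h.ne_zero n), h.natDegree_eq]

theorem map_mul_eq_zero_of_degree_lt (h : IsOrthogonalFamily L P c) {m : ℕ} {q : K[X]}
    (hq : q.degree < m) : L (P m * q) = 0 := by
  have hspan := h.toSequence.span_degreeLT (m := m) fun i _ =>
    (leadingCoeff_ne_zero.2 (h.ne_zero i)).isUnit
  have hmem : q ∈ Submodule.span K (h.toSequence '' Set.Iio m) := hspan ▸ mem_degreeLT.2 hq
  refine Submodule.span_le (p := LinearMap.ker (L ∘ₗ LinearMap.mulLeft K (P m))) |>.2 ?_ hmem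
  rintro _ ⟨k, hk, rfl⟩
  simp [toSequence, h.map_mul, (Set.mem_Iio.1 hk).ne']

theorem map_mul_of_natDegree_le (h : IsOrthogonalFamily L P c) {m : ℕ} {q : K[X]}
    (hq : q.natDegree ≤ m) : L (P m * q) = q.coeff m / (P m).leadingCoeff * c := by
  set s := q.coeff m / (P m).leadingCoeff
  have hrest : (q - C s * P m).degree < m := by
    refine degree_lt_iff_coeff_zero _ _ |>.2 fun i hi => ?_
    rcases (Nat.cast_le.1 hi).eq_or_lt with rfl | hi
    · simp [s, h.coeff_self, leadingCoeff_ne_zero.2 (h.ne_zero m)]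
    · rw [coeff_sub, coeff_C_mul, coeff_eq_zero_of_natDegree_lt (hq.trans_lt hi),
        coeff_eq_zero_of_natDegree_lt ((h.natDegree_eq m).trans_lt hi), mul_zero, sub_zero]
  have hsplit : P m * q = P m * (q - C s * P m) + s • (P m * P m) := by
    rw [smul_eq_C_mul]; ring
  rw [hsplit, map_add, h.map_mul_eq_zero_of_degree_lt hrest, map_smul, h.map_mul, if_pos rfl,
    zero_add, smul_eq_mul]

theorem eq_zero_of_forall_map_mul_eq_zero (h : IsOrthogonalFamily L P c) {N : ℕ} {q : K[X]}
    (hq : q.natDegree ≤ N) (hL : ∀ k ≤ N, L (P k * q) = 0) : q = 0 := by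
  have := h.map_mul_of_natDegree_le le_rfl (q := q)
  rw [hL _ hq, coeff_natDegree, eq_comm] at this
  simpa [h.const_ne_zero, leadingCoeff_ne_zero.2 (h.ne_zero _)] using this

/- In the hypothesis `hD` below, `D m` plays the role of `∂_ζ P_m` for a family of functionals with
`∂_ζ L p = -L (X * p)`: it is the derivative of the relations `L (P m * P k) = δ_{mk} c`. -/
section Deformation

variable {D : ℕ → K[X]} {c' : K}

theorem map_mul_deformation_of_le (h : IsOrthogonalFamily L P c)
    (hD : ∀ m k, L (D m * P k) + L (P m * D k) - L (X * (P m * P k)) = if m = k then c' else 0)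
    (hDdeg : ∀ m, (D m).natDegree ≤ m) {n k : ℕ} (hk : k ≤ n) :
    L (P k * D (n + 1)) = (P k).coeff n / (P (n + 1)).leadingCoeff * c := by
  have hXk : (X * P k).natDegree ≤ n + 1 := by
    grw [natDegree_mul_le, natDegree_X, h.natDegree_eq, hk, add_comm]
  have hDk : (D k).degree < ↑(n + 1) :=
    (degree_le_of_natDegree_le (hDdeg k)).trans_lt (by exact_mod_cast Nat.lt_succ_of_le hk)
  have := hD (n + 1) k
  rw [if_neg (by omega), h.map_mul_eq_zero_of_degree_lt hDk, mul_left_comm,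
    h.map_mul_of_natDegree_le hXk, coeff_X_mul] at this
  rw [mul_comm]
  linear_combination this

theorem map_mul_deformation_self [NeZero (2 : K)]
    (hD : ∀ m k, L (D m * P k) + L (P m * D k) - L (X * (P m * P k)) = if m = k then c' else 0)
    (n : ℕ) : L (P n * D n) = (L (X * (P n * P n)) + c') / 2 := by
  have := hD n n
  rw [if_pos rfl, mul_comm (D n)] at this
  field_simp
  linear_combination this

theorem eq_of_deformation [NeZero (2 : K)] (h : IsOrthogonalFamily L P c)
    (hD : ∀ m k, L (D m * P k) + L (P m * D k) - L (X * (P m * P k)) = if m = k then c' else 0)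
    (hDdeg : ∀ m, (D m).natDegree ≤ m) (n : ℕ) :
    D (n + 1) = C ((P n).leadingCoeff / (P (n + 1)).leadingCoeff) * P n
      + C ((L (X * (P (n + 1) * P (n + 1))) + c') / (2 * c)) * P (n + 1) := by
  refine sub_eq_zero.1 (h.eq_zero_of_forall_map_mul_eq_zero (N := n + 1) ?_ fun k hk => ?_)
  · refine (natDegree_sub_le_of_le (hDdeg _) (natDegree_add_le_of_degree_le ?_ ?_)).trans
      (max_self _).le <;> grw [natDegree_C_mul_le, h.natDegree_eq]
    omega
  simp only [← smul_eq_C_mul, mul_sub, mul_add, mul_smul_comm, map_sub, map_add, map_smul,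
    h.map_mul, smul_eq_mul]
  rcases hk.lt_or_eq with hkn | rfl
  · rw [h.map_mul_deformation_of_le hD hDdeg (Nat.lt_succ_iff.1 hkn)]
    rcases (Nat.lt_succ_iff.1 hkn).lt_or_eq with hkn | rfl
    · rw [coeff_eq_zero_of_natDegree_lt ((h.natDegree_eq k).trans_lt hkn), if_neg hkn.ne,
        if_neg (by omega)]
      ring
    · rw [h.coeff_self, if_pos rfl, if_neg (by omega)]
      ring
  · rw [map_mul_deformation_self hD, if_neg (by omega), if_pos rfl]
    field_simp [h.const_ne_zero]
    ring

end Deformation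

end IsOrthogonalFamily

section CoeffwiseDeriv

variable {𝕜 : Type*} [NontriviallyNormedField 𝕜]

def momentFunctional (m : ℕ → 𝕜) : 𝕜[X] →ₗ[𝕜] 𝕜 :=
  lsum fun i => m i • LinearMap.id

theorem momentFunctional_eq_sum_range (m : ℕ → 𝕜) {p : 𝕜[X]} {N : ℕ} (hp : p.natDegree < N) :
    momentFunctional m p = ∑ i ∈ Finset.range N, p.coeff i * m i := by
  simp [momentFunctional, sum_over_range' p _ N hp, mul_comm]

theorem momentFunctional_monomial (m : ℕ → 𝕜) (i : ℕ) (a : 𝕜) :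
    momentFunctional m (monomial i a) = a * m i := by
  simp [momentFunctional, mul_comm]

theorem momentFunctional_X_mul (m : ℕ → 𝕜) (p : 𝕜[X]) :
    momentFunctional m (X * p) = momentFunctional (fun i => m (i + 1)) p := by
  induction p using Polynomial.induction_on' with
  | add p q hp hq => rw [mul_add, map_add, map_add, hp, hq]
  | monomial i a => rw [X_mul_monomial, momentFunctional_monomial, momentFunctional_monomial]

theorem momentFunctional_pow (x : 𝕜) (p : 𝕜[X]) : momentFunctional (x ^ ·) p = p.eval x := by
  simp [momentFunctional, eval_eq_sum, mul_comm]

theorem momentFunctional_neg (m : ℕ → 𝕜) : momentFunctional (-m) = -momentFunctional m := by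
  ext; simp [momentFunctional]

theorem momentFunctional_zero : momentFunctional (0 : ℕ → 𝕜) = 0 := by
  ext; simp [momentFunctional]

def HasCoeffwiseDerivAt (p : 𝕜 → 𝕜[X]) (p' : 𝕜[X]) (ζ : 𝕜) : Prop :=
  ∀ i, HasDerivAt (fun t => (p t).coeff i) (p'.coeff i) ζ

variable {p q : 𝕜 → 𝕜[X]} {p' q' : 𝕜[X]} {ζ : 𝕜} {N : ℕ}

theorem exists_hasCoeffwiseDerivAt (hdeg : ∀ᶠ t in 𝓝 ζ, (p t).natDegree ≤ N)
    (hdiff : ∀ i, DifferentiableAt 𝕜 (fun t => (p t).coeff i) ζ) :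
    ∃ p', HasCoeffwiseDerivAt p p' ζ := by
  refine ⟨∑ i ∈ Finset.range (N + 1), monomial i (deriv (fun t => (p t).coeff i) ζ),
    fun i => ?_⟩
  rw [finsetSum_coeff]
  rcases Nat.lt_or_ge i (N + 1) with hi | hi
  · rw [Finset.sum_eq_single_of_mem i (Finset.mem_range.2 hi) fun j _ hj => by
      simp [coeff_monomial, hj], coeff_monomial, if_pos rfl]
    exact (hdiff i).hasDerivAt
  · have hzero : (fun t => (p t).coeff i) =ᶠ[𝓝 ζ] fun _ => 0 := hdeg.mono fun t ht =>
      coeff_eq_zero_of_natDegree_lt (by omega)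
    rw [Finset.sum_eq_zero fun j hj => by
      simp [coeff_monomial, (Finset.mem_range.1 hj).trans_le hi |>.ne]]
    exact (hasDerivAt_const ζ (0 : 𝕜)).congr_of_eventuallyEq hzero

namespace HasCoeffwiseDerivAt

theorem natDegree_le (hp : HasCoeffwiseDerivAt p p' ζ)
    (hdeg : ∀ᶠ t in 𝓝 ζ, (p t).natDegree ≤ N) : p'.natDegree ≤ N := by
  refine natDegree_le_iff_coeff_eq_zero.2 fun i hi => (hp i).unique ?_
  refine (hasDerivAt_const ζ (0 : 𝕜)).congr_of_eventuallyEq (hdeg.mono fun t ht => ?_)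
  exact coeff_eq_zero_of_natDegree_lt (ht.trans_lt (by exact_mod_cast hi))

theorem mul (hp : HasCoeffwiseDerivAt p p' ζ) (hq : HasCoeffwiseDerivAt q q' ζ) :
    HasCoeffwiseDerivAt (fun t => p t * q t) (p' * q ζ + p ζ * q') ζ := fun i => by
  simp only [coeff_add, coeff_mul, ← Finset.sum_add_distrib]
  exact HasDerivAt.fun_sum fun x _ => (hp x.1).mul (hq x.2)

theorem hasDerivAt_momentFunctional (hp : HasCoeffwiseDerivAt p p' ζ)
    (hdeg : ∀ᶠ t in 𝓝 ζ, (p t).natDegree ≤ N) {m : 𝕜 → ℕ → 𝕜} {m' : ℕ → 𝕜}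
    (hm : ∀ i, HasDerivAt (fun t => m t i) (m' i) ζ) :
    HasDerivAt (fun t => momentFunctional (m t) (p t))
      (momentFunctional (m ζ) p' + momentFunctional m' (p ζ)) ζ := by
  rw [momentFunctional_eq_sum_range _ (Nat.lt_succ_of_le (hp.natDegree_le hdeg)),
    momentFunctional_eq_sum_range _ (Nat.lt_succ_of_le hdeg.self_of_nhds),
    ← Finset.sum_add_distrib]
  refine (HasDerivAt.fun_sum fun i _ => (hp i).mul (hm i)).congr_of_eventuallyEq ?_
  filter_upwards [hdeg] with t ht
  exact momentFunctional_eq_sum_range _ (Nat.lt_succ_of_le ht)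

theorem hasDerivAt_eval (hp : HasCoeffwiseDerivAt p p' ζ)
    (hdeg : ∀ᶠ t in 𝓝 ζ, (p t).natDegree ≤ N) (x : 𝕜) :
    HasDerivAt (fun t => (p t).eval x) (p'.eval x) ζ := by
  simpa [momentFunctional_pow, momentFunctional_zero] using
    hp.hasDerivAt_momentFunctional hdeg (m := fun _ i => x ^ i) (m' := 0)
      fun i => hasDerivAt_const ζ _

end HasCoeffwiseDerivAt

end CoeffwiseDeriv

noncomputable def besselWeight (α ζ x : ℝ) : ℝ := (x ^ 2 - 1) ^ α * Real.exp (-ζ * x)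

noncomputable def besselMoment (α ζ : ℝ) (r : ℕ) : ℝ := ∫ x in Ioi 1, x ^ r * besselWeight α ζ x

section BesselWeight

variable {α ζ : ℝ}

theorem besselWeight_nonneg {x : ℝ} (hx : 1 ≤ x) : 0 ≤ besselWeight α ζ x :=
  mul_nonneg (Real.rpow_nonneg (by nlinarith) _) (Real.exp_nonneg _)

theorem besselWeight_pos {x : ℝ} (hx : 1 < x) : 0 < besselWeight α ζ x :=
  mul_pos (Real.rpow_pos_of_pos (by nlinarith) _) (Real.exp_pos _)

theorem besselWeight_le_of_le {s t x : ℝ} (hx : 1 ≤ x) (hst : s ≤ t) :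
    besselWeight α t x ≤ besselWeight α s x := by
  unfold besselWeight
  gcongr
  exact Real.rpow_nonneg (by nlinarith) _

theorem hasDerivAt_besselWeight (t x : ℝ) :
    HasDerivAt (fun t => besselWeight α t x) (-(x * besselWeight α t x)) t := by
  refine (((hasDerivAt_neg t).mul_const x).exp.const_mul ((x ^ 2 - 1) ^ α)).congr_deriv ?_
  simp only [besselWeight]
  ring

theorem continuousOn_besselWeight : ContinuousOn (besselWeight α ζ) (Ioi 1) := by
  refine ContinuousOn.mul (ContinuousOn.rpow_const (by fun_prop) fun x (hx : 1 < x) => ?_)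
    (by fun_prop)
  exact Or.inl (by nlinarith)

theorem integrableOn_Ioc_pow_mul_besselWeight (hα : -1 < α) (ζ : ℝ) (r : ℕ) :
    IntegrableOn (fun x => x ^ r * besselWeight α ζ x) (Ioc 1 2) := by
  have hsing : IntervalIntegrable (fun x : ℝ => (x - 1) ^ α) volume 1 2 := by
    simpa [one_add_one_eq_two] using
      (intervalIntegral.intervalIntegrable_rpow' hα (a := 0) (b := 1)).comp_sub_right 1
  have hreg : ContinuousOn (fun x : ℝ => x ^ r * (x + 1) ^ α * Real.exp (-ζ * x)) (uIcc 1 2) := by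
    refine ContinuousOn.mul (ContinuousOn.mul (by fun_prop)
      (ContinuousOn.rpow_const (by fun_prop) fun x hx => ?_)) (by fun_prop)
    rw [uIcc_of_le one_le_two] at hx
    exact Or.inl (by linarith [hx.1])
  have := hsing.mul_continuousOn hreg
  rw [intervalIntegrable_iff_integrableOn_Ioc_of_le one_le_two] at this
  refine this.congr_fun (fun x hx => ?_) measurableSet_Ioc
  rw [besselWeight, show x ^ 2 - 1 = (x - 1) * (x + 1) by ring,
    Real.mul_rpow (by linarith [hx.1]) (by linarith [hx.1])]
  ring

theorem besselWeight_le_rpow_mul_exp {x : ℝ} (hx : 2 ≤ x) :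
    besselWeight α ζ x ≤ x ^ (2 * |α|) * Real.exp (-ζ * x) := by
  refine mul_le_mul_of_nonneg_right ?_ (Real.exp_nonneg _)
  rcases le_or_gt 0 α with hα | hα
  · rw [abs_of_nonneg hα, Real.rpow_mul (by linarith), Real.rpow_two]
    exact Real.rpow_le_rpow (by nlinarith) (by linarith) hα
  · exact (Real.rpow_le_one_of_one_le_of_nonpos (by nlinarith) hα.le).trans
      (Real.one_le_rpow (by linarith) (by positivity))

theorem integrableOn_Ioi_pow_mul_besselWeight (α : ℝ) (hζ : 0 < ζ) (r : ℕ) :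
    IntegrableOn (fun x => x ^ r * besselWeight α ζ x) (Ioi 2) := by
  have hdom : IntegrableOn (fun x : ℝ => x ^ ((r : ℝ) + 2 * |α|) * Real.exp (-ζ * x ^ (1 : ℝ)))
      (Ioi 2) :=
    (integrableOn_rpow_mul_exp_neg_mul_rpow (by linarith [abs_nonneg α, r.cast_nonneg (α := ℝ)])
      one_pos hζ).mono_set (Ioi_subset_Ioi zero_le_two)
  refine hdom.mono' (((continuousOn_pow r).mul continuousOn_besselWeight).mono
    (Ioi_subset_Ioi one_le_two) |>.aestronglyMeasurable measurableSet_Ioi) ?_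
  filter_upwards [ae_restrict_mem measurableSet_Ioi] with x (hx : 2 < x)
  rw [Real.norm_of_nonneg (mul_nonneg (by positivity) (besselWeight_nonneg (by linarith))),
    Real.rpow_one, Real.rpow_add (by linarith), Real.rpow_natCast, mul_assoc]
  gcongr
  exact besselWeight_le_rpow_mul_exp hx.le

theorem integrableOn_pow_mul_besselWeight (hα : -1 < α) (hζ : 0 < ζ) (r : ℕ) :
    IntegrableOn (fun x => x ^ r * besselWeight α ζ x) (Ioi 1) := by
  rw [← Ioc_union_Ioi_eq_Ioi one_le_two]
  exact (integrableOn_Ioc_pow_mul_besselWeight hα ζ r).union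
    (integrableOn_Ioi_pow_mul_besselWeight α hζ r)

theorem besselMoment_pos (hα : -1 < α) (hζ : 0 < ζ) (r : ℕ) : 0 < besselMoment α ζ r := by
  have hint := integrableOn_pow_mul_besselWeight hα hζ r
  refine (setIntegral_pos_iff_support_of_nonneg_ae ?_ hint).2 ?_
  · filter_upwards [ae_restrict_mem measurableSet_Ioi] with x (hx : 1 < x)
    exact mul_nonneg (by positivity) (besselWeight_nonneg hx.le)
  · have : Ioi (1 : ℝ) ⊆ Function.support (fun x => x ^ r * besselWeight α ζ x) ∩ Ioi 1 :=
      fun x (hx : 1 < x) => ⟨(mul_pos (by positivity) (besselWeight_pos hx)).ne', hx⟩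
    exact (measure_mono this).trans_lt' (by simp)

theorem integral_eval_mul_besselWeight (hα : -1 < α) (hζ : 0 < ζ) (p : ℝ[X]) :
    ∫ x in Ioi 1, p.eval x * besselWeight α ζ x = momentFunctional (besselMoment α ζ) p := by
  simp_rw [eval_eq_sum_range, Finset.sum_mul, mul_assoc]
  rw [integral_finsetSum _ fun i _ => (integrableOn_pow_mul_besselWeight hα hζ i).const_mul _,
    momentFunctional_eq_sum_range _ (Nat.lt_succ_self _)]
  simp_rw [integral_const_mul]
  rfl

theorem hasDerivAt_besselMoment (hα : -1 < α) (hζ : 0 < ζ) (r : ℕ) :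
    HasDerivAt (fun t => besselMoment α t r) (-besselMoment α ζ (r + 1)) ζ := by
  have hball : Metric.ball ζ (ζ / 2) ⊆ Ioi (ζ / 2) := fun t ht => by
    rw [Metric.mem_ball, Real.dist_eq, abs_lt] at ht
    exact show ζ / 2 < t by linarith
  have key := hasDerivAt_integral_of_dominated_loc_of_deriv_le (μ := volume.restrict (Ioi 1))
    (F' := fun t x => -(x ^ (r + 1) * besselWeight α t x))
    (bound := fun x => x ^ (r + 1) * besselWeight α (ζ / 2) x)
    (Metric.ball_mem_nhds ζ (half_pos hζ))
    ((eventually_gt_nhds hζ).mono fun t ht =>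
      (integrableOn_pow_mul_besselWeight hα ht r).aestronglyMeasurable)
    (integrableOn_pow_mul_besselWeight hα hζ r)
    (integrableOn_pow_mul_besselWeight hα hζ (r + 1)).aestronglyMeasurable.neg ?_
    (integrableOn_pow_mul_besselWeight hα (half_pos hζ) (r + 1)) ?_
  · simpa [besselMoment, integral_neg] using key.2
  · filter_upwards [ae_restrict_mem measurableSet_Ioi] with x (hx : 1 < x) t ht
    rw [norm_neg, Real.norm_of_nonneg (mul_nonneg (by positivity) (besselWeight_nonneg hx.le))]
    exact mul_le_mul_of_nonneg_left (besselWeight_le_of_le hx.le (hball ht).le) (by positivity)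
  · refine ae_of_all _ fun x t _ => ?_
    refine ((hasDerivAt_besselWeight t x).const_mul (x ^ r)).congr_deriv ?_
    ring

theorem besselMoment_add_one (hα : -1 < α) (hζ : 0 < ζ) (r : ℕ) :
    besselMoment (α + 1) ζ r = besselMoment α ζ (r + 2) - besselMoment α ζ r := by
  rw [besselMoment, besselMoment, besselMoment, ← integral_sub
    (integrableOn_pow_mul_besselWeight hα hζ _) (integrableOn_pow_mul_besselWeight hα hζ _)]
  refine setIntegral_congr_fun measurableSet_Ioi fun x (hx : 1 < x) => ?_
  rw [besselWeight, besselWeight, Real.rpow_add_one (by nlinarith)]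
  ring

-- Integration by parts against `d/dx (x² - 1)^(α + 1) = 2 (α + 1) x (x² - 1)^α`.
theorem mul_besselMoment_add_one (hα : -1 < α) (hζ : 0 < ζ) :
    ζ * besselMoment (α + 1) ζ 0 = 2 * (α + 1) * besselMoment α ζ 1 := by
  have hderiv : ∀ x ∈ Ioi (1 : ℝ), HasDerivAt (fun x => -besselWeight (α + 1) ζ x)
      (ζ * (x ^ 0 * besselWeight (α + 1) ζ x) - 2 * (α + 1) * (x ^ 1 * besselWeight α ζ x)) x := by
    intro x (hx : 1 < x)
    have h1 := ((hasDerivAt_pow 2 x).sub_const 1).rpow_const (p := α + 1) (Or.inl (by nlinarith))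
    have h2 := ((hasDerivAt_id' x).const_mul (-ζ)).exp
    refine (h1.mul h2).neg.congr_deriv ?_
    simp only [besselWeight, add_sub_cancel_right]
    ring
  have hint : IntegrableOn (fun x => ζ * (x ^ 0 * besselWeight (α + 1) ζ x)
      - 2 * (α + 1) * (x ^ 1 * besselWeight α ζ x)) (Ioi 1) :=
    ((integrableOn_pow_mul_besselWeight (by linarith) hζ 0).const_mul ζ).sub
      ((integrableOn_pow_mul_besselWeight hα hζ 1).const_mul _)
  have hcont : ContinuousWithinAt (fun x => -besselWeight (α + 1) ζ x) (Ici 1) 1 :=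
    ((((continuousAt_id.pow 2).sub continuousAt_const).rpow_const
      (Or.inr (by linarith))).mul (by fun_prop)).neg.continuousWithinAt
  have htend : Tendsto (fun x => -besselWeight (α + 1) ζ x) atTop (𝓝 0) := by
    have hdecay := tendsto_rpow_mul_exp_neg_mul_atTop_nhds_zero (2 * |α + 1|) ζ hζ
    simpa using (tendsto_of_tendsto_of_tendsto_of_le_of_le' tendsto_const_nhds hdecay
      ((eventually_ge_atTop 1).mono fun x hx => besselWeight_nonneg hx)
      ((eventually_ge_atTop 2).mono fun x hx => besselWeight_le_rpow_mul_exp hx)).neg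
  have key := integral_Ioi_of_hasDerivAt_of_tendsto hcont hderiv hint htend
  rw [integral_sub ((integrableOn_pow_mul_besselWeight (by linarith) hζ 0).const_mul ζ)
    ((integrableOn_pow_mul_besselWeight hα hζ 1).const_mul _), integral_const_mul,
    integral_const_mul] at key
  have hw1 : besselWeight (α + 1) ζ 1 = 0 := by
    simp [besselWeight, Real.zero_rpow (by linarith : α + 1 ≠ 0)]
  rw [besselMoment, besselMoment]
  linarith

end BesselWeight

-- Substitute `x = cosh t` and use `cosh (n t) = T_n (cosh t)`.
theorem besselK_eq_integral_chebyshevT (n : ℕ) (ζ : ℝ) :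
    besselK n ζ = ∫ x in Ioi 1, (Chebyshev.T ℝ n).eval x * besselWeight (-1 / 2) ζ x := by
  rw [← integral_Ici_eq_integral_Ioi, ← Real.cosh_bijOn.image_eq,
    integral_image_eq_integral_abs_deriv_smul measurableSet_Ici
      (fun t _ => (Real.hasDerivAt_cosh t).hasDerivWithinAt) Real.cosh_injOn,
    integral_Ici_eq_integral_Ioi, besselK]
  refine setIntegral_congr_fun measurableSet_Ioi fun t (ht : 0 < t) => ?_
  have hs := Real.sinh_pos_iff.2 ht
  rw [smul_eq_mul, besselWeight, Real.cosh_sq', add_sub_cancel_left, Chebyshev.T_real_cosh,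
    show (-1 / 2 : ℝ) = -(1 / 2) by norm_num, Real.rpow_neg (sq_nonneg _), ← Real.sqrt_eq_rpow,
    Real.sqrt_sq hs.le, abs_of_pos hs]
  field_simp
  push_cast
  ring_nf

theorem besselK_eq_momentFunctional {ζ : ℝ} (hζ : 0 < ζ) (n : ℕ) :
    besselK n ζ = momentFunctional (besselMoment (-1 / 2) ζ) (Chebyshev.T ℝ n) := by
  rw [besselK_eq_integral_chebyshevT, integral_eval_mul_besselWeight (by norm_num) hζ]

theorem besselK_one_eq {ζ : ℝ} (hζ : 0 < ζ) : besselK 1 ζ = besselMoment (-1 / 2) ζ 1 := by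
  simpa [momentFunctional] using besselK_eq_momentFunctional hζ 1

theorem besselK_two_eq {ζ : ℝ} (hζ : 0 < ζ) :
    besselK 2 ζ = 2 * besselMoment (-1 / 2) ζ 2 - besselMoment (-1 / 2) ζ 0 := by
  rw [besselK_eq_momentFunctional hζ, Nat.cast_ofNat, Chebyshev.T_two,
    momentFunctional_eq_sum_range _ (N := 3) (by compute_degree!)]
  simp [Finset.sum_range_succ, coeff_one, coeff_X_pow]
  ring

theorem besselK_one_pos {ζ : ℝ} (hζ : 0 < ζ) : 0 < besselK 1 ζ :=
  besselK_one_eq hζ ▸ besselMoment_pos (by norm_num) hζ 1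

theorem hasDerivAt_besselK_one {ζ : ℝ} (hζ : 0 < ζ) :
    HasDerivAt (besselK 1) (besselK 1 ζ / ζ - besselK 2 ζ) ζ := by
  have hM := hasDerivAt_besselMoment (α := -1 / 2) (by norm_num) hζ 1
  have hparts := mul_besselMoment_add_one (α := -1 / 2) (by norm_num) hζ
  rw [besselMoment_add_one (by norm_num) hζ] at hparts
  refine (hM.congr_of_eventuallyEq ((eventually_gt_nhds hζ).mono fun t ht =>
    besselK_one_eq ht)).congr_deriv ?_
  rw [besselK_one_eq hζ, besselK_two_eq hζ]
  norm_num at hparts ⊢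
  field_simp
  linarith

theorem integral_eval_mul_wgt (ℓ : ℕ) {ζ : ℝ} (hζ : 0 < ζ) (p : ℝ[X]) :
    ∫ x in Ioi 1, p.eval x * wgt ℓ ζ x
      = momentFunctional (besselMoment (ℓ - 1 / 2) ζ) p / besselK 1 ζ := by
  rw [← integral_eval_mul_besselWeight (by linarith [ℓ.cast_nonneg (α := ℝ)]) hζ, ← integral_div]
  simp only [wgt, besselWeight, mul_div_assoc]

theorem isOrthogonalFamily_of_orthonormal_wgt {ℓ : ℕ} {ζ : ℝ} (hζ : 0 < ζ) {Q : ℕ → ℝ[X]}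
    (hdeg : ∀ n, (Q n).natDegree = n)
    (horth : ∀ m n,
      ∫ x in Ioi 1, (Q m).eval x * (Q n).eval x * wgt ℓ ζ x = if m = n then 1 else 0) :
    IsOrthogonalFamily (momentFunctional (besselMoment (ℓ - 1 / 2) ζ)) Q (besselK 1 ζ) := by
  refine ⟨hdeg, fun m n => ?_, (besselK_one_pos hζ).ne'⟩
  have := horth m n
  simp_rw [← eval_mul, integral_eval_mul_wgt ℓ hζ, div_eq_iff (besselK_one_pos hζ).ne'] at this
  rw [this, ite_mul, one_mul, zero_mul]

theorem besselMoment_deformation {α ζ : ℝ} (hα : -1 < α) (hζ : 0 < ζ) {P : ℝ → ℕ → ℝ[X]}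
    {c : ℝ → ℝ} {c' : ℝ} {D : ℕ → ℝ[X]}
    (hP : ∀ᶠ t in 𝓝 ζ, IsOrthogonalFamily (momentFunctional (besselMoment α t)) (P t) (c t))
    (hc : HasDerivAt c c' ζ) (hD : ∀ m, HasCoeffwiseDerivAt (fun t => P t m) (D m) ζ) (m k : ℕ) :
    momentFunctional (besselMoment α ζ) (D m * P ζ k)
      + momentFunctional (besselMoment α ζ) (P ζ m * D k)
      - momentFunctional (besselMoment α ζ) (X * (P ζ m * P ζ k)) = if m = k then c' else 0 := by
  have hdeg : ∀ j, ∀ᶠ t in 𝓝 ζ, (P t j).natDegree ≤ j := fun j =>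
    hP.mono fun t ht => (ht.natDegree_eq j).le
  have hprod := ((hD m).mul (hD k)).hasDerivAt_momentFunctional
    (m' := -fun i => besselMoment α ζ (i + 1))
    (((hdeg m).and (hdeg k)).mono fun t ht => natDegree_mul_le.trans (add_le_add ht.1 ht.2))
    fun i => hasDerivAt_besselMoment hα hζ i
  have hnorm : HasDerivAt (fun t => if m = k then c t else 0) (if m = k then c' else 0) ζ := by
    split_ifs
    exacts [hc, hasDerivAt_const _ _]
  rw [(hnorm.congr_of_eventuallyEq (hP.mono fun t ht => ht.map_mul m k)).unique hprod, map_add,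
    momentFunctional_neg, LinearMap.neg_apply, momentFunctional_X_mul]
  ring

theorem stmt9_general
    (ℓ : ℕ)
    (P : ℝ → ℕ → Polynomial ℝ) (lc : ℝ → ℕ → ℝ)
    (hdeg : ∀ ζ : ℝ, 0 < ζ → ∀ n, (P ζ n).natDegree = n)
    (hlc : ∀ ζ : ℝ, 0 < ζ → ∀ n, (P ζ n).leadingCoeff = lc ζ n)
    (horth : ∀ ζ : ℝ, 0 < ζ → ∀ m n, (∫ x in Set.Ioi (1 : ℝ),
        (P ζ m).eval x * (P ζ n).eval x * wgt ℓ ζ x) = if m = n then (1 : ℝ) else 0)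
    (hcoeff : ∀ n k, DifferentiableOn ℝ (fun ζ => (P ζ n).coeff k) (Set.Ioi 0))
    (a b : ℝ → ℕ → ℝ)
    (ha : ∀ ζ n, a ζ n = lc ζ n / lc ζ (n + 1))
    (hb : ∀ ζ : ℝ, 0 < ζ → ∀ n, b ζ n =
      ∫ x in Set.Ioi (1 : ℝ), x * ((P ζ n).eval x) ^ 2 * wgt ℓ ζ x) :
    ∀ ζ : ℝ, 0 < ζ → ∀ n : ℕ, ∀ x : ℝ,
      HasDerivAt (fun t => (P t (n + 1)).eval x)
        (a ζ n * (P ζ n).eval x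
          - 1 / 2 * (Gfun ζ - ζ⁻¹ - b ζ (n + 1)) * (P ζ (n + 1)).eval x) ζ := by
  intro ζ hζ n x
  have hortho : ∀ t, 0 < t → IsOrthogonalFamily (momentFunctional (besselMoment (ℓ - 1 / 2) t))
      (P t) (besselK 1 t) := fun t ht =>
    isOrthogonalFamily_of_orthonormal_wgt ht (hdeg t ht) (horth t ht)
  have hdeg_near : ∀ m, ∀ᶠ t in 𝓝 ζ, (P t m).natDegree ≤ m := fun m =>
    (eventually_gt_nhds hζ).mono fun t ht => (hdeg t ht m).le
  choose D hD using fun m => exists_hasCoeffwiseDerivAt (hdeg_near m) fun i =>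
    (hcoeff m i).differentiableAt (isOpen_Ioi.mem_nhds hζ)
  have hDeq := (hortho ζ hζ).eq_of_deformation
    (besselMoment_deformation (by linarith [ℓ.cast_nonneg (α := ℝ)]) hζ
      ((eventually_gt_nhds hζ).mono hortho) (hasDerivAt_besselK_one hζ) hD)
    (fun m => (hD m).natDegree_le (hdeg_near m)) n
  have hb' : b ζ (n + 1) = momentFunctional (besselMoment (ℓ - 1 / 2) ζ)
      (X * (P ζ (n + 1) * P ζ (n + 1))) / besselK 1 ζ := by
    rw [hb ζ hζ, ← integral_eval_mul_wgt ℓ hζ]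
    simp only [eval_mul, eval_X, sq, mul_assoc]
  refine ((hD (n + 1)).hasDerivAt_eval (hdeg_near _) x).congr_deriv ?_
  rw [hDeq, ha, ← hlc ζ hζ, ← hlc ζ hζ, hb', Gfun]
  have hK := (besselK_one_pos hζ).ne'
  simp only [eval_add, eval_mul, eval_C]
  field_simp
  ring

theorem stmt9
    (ℓ : ℕ) (hℓ : ℓ ≤ 1)
    (P : ℝ → ℕ → Polynomial ℝ) (lc : ℝ → ℕ → ℝ)
    (hdeg : ∀ ζ : ℝ, 0 < ζ → ∀ n, (P ζ n).natDegree = n)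
    (hlc : ∀ ζ : ℝ, 0 < ζ → ∀ n, (P ζ n).leadingCoeff = lc ζ n)
    (hlcpos : ∀ ζ : ℝ, 0 < ζ → ∀ n, 0 < lc ζ n)
    (horth : ∀ ζ : ℝ, 0 < ζ → ∀ m n, (∫ x in Set.Ioi (1 : ℝ),
        (P ζ m).eval x * (P ζ n).eval x * wgt ℓ ζ x) = if m = n then (1 : ℝ) else 0)
    (hcoeff : ∀ n k, DifferentiableOn ℝ (fun ζ => (P ζ n).coeff k) (Set.Ioi 0))
    (a b : ℝ → ℕ → ℝ)
    (ha : ∀ ζ n, a ζ n = lc ζ n / lc ζ (n + 1))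
    (hb : ∀ ζ : ℝ, 0 < ζ → ∀ n, b ζ n =
      ∫ x in Set.Ioi (1 : ℝ), x * ((P ζ n).eval x) ^ 2 * wgt ℓ ζ x) :
    ∀ ζ : ℝ, 0 < ζ → ∀ n : ℕ, ∀ x : ℝ,
      HasDerivAt (fun t => (P t (n + 1)).eval x)
        (a ζ n * (P ζ n).eval x
          - 1 / 2 * (Gfun ζ - ζ⁻¹ - b ζ (n + 1)) * (P ζ (n + 1)).eval x) ζ :=
  stmt9_general ℓ P lc hdeg hlc horth hcoeff a b ha hb
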